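/- Sphere case. Assume c² < −4(b k + k²). Let W : (0,∞) → ℝ³ be a nonconstant similarity spherical profile with lim_{r→0⁺} W(r) = (1,0,0) and lim_{r→0⁺} r |W′(r)| = 0. Then: (0) for every r > 0 the identity r² |W′(r)|² − 4 μ r W′(r)·(e₀ × W(r)) = −2 g(W(r)·e₀) + 4 μ c (1 − W(r)·e₀) holds; (1) W(r) ≠ (1,0,0) for every r > 0; (2) |W′(r)| = O(1/r) as r → ∞; (3) the limit lim_{r→∞} W(r)·e₀ exists. -/

import Mathlib

open Set Filter Asymptotics

/-- Euclidean dot product on `ℝ³`. -/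
noncomputable def dot3 (v w : Fin 3 → ℝ) : ℝ := v 0 * w 0 + v 1 * w 1 + v 2 * w 2

/-- Euclidean norm on `ℝ³`. -/
noncomputable def norm3 (v : Fin 3 → ℝ) : ℝ := Real.sqrt (dot3 v v)

/-- Cross product on `ℝ³`. -/
noncomputable def cross3 (v w : Fin 3 → ℝ) : Fin 3 → ℝ :=
  ![v 1 * w 2 - v 2 * w 1, v 2 * w 0 - v 0 * w 2, v 0 * w 1 - v 1 * w 0]

/-- The north pole `e₀ = (1,0,0)`. -/
noncomputable def e0 : Fin 3 → ℝ := ![1, 0, 0]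

/-- `g(w) = (k²/2)(1 − w²) + bk(1 − w) − k²(1 − w)²`. -/
noncomputable def gfun (k b : ℝ) (w : ℝ) : ℝ :=
  k ^ 2 / 2 * (1 - w ^ 2) + b * k * (1 - w) - k ^ 2 * (1 - w) ^ 2

/-- A similarity spherical profile on `J ⊆ (0,∞)`: a twice differentiable
`W : J → S² ⊂ ℝ³` solving the reduced similarity equation (5.5). -/
def IsSimProfile (k b c μ : ℝ) (J : Set ℝ) (W : ℝ → Fin 3 → ℝ) : Prop :=
  J ⊆ Ioi (0:ℝ) ∧
  (∀ r ∈ J, DifferentiableAt ℝ W r ∧ DifferentiableAt ℝ (deriv W) r) ∧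
  (∀ r ∈ J, dot3 (W r) (W r) = 1) ∧
  (∀ r ∈ J,
    deriv (deriv W) r + dot3 (deriv W r) (deriv W r) • W r + (1 / r) • deriv W r
      + (deriv (gfun k b) (dot3 (W r) e0) / r ^ 2) • (e0 - dot3 (W r) e0 • W r)
      + μ • (e0 - dot3 (W r) e0 • W r)
      + (c / r - r / 2) • cross3 (W r) (deriv W r) = 0)


-- ===== auxiliary lemmas =====

theorem myCongrDeriv {f : ℝ → ℝ} {a b x : ℝ} (h : HasDerivAt f a x) (e : a = b) :
    HasDerivAt f b x := e ▸ h

theorem dot3_e0 (v : Fin 3 → ℝ) : dot3 v e0 = v 0 := by simp [dot3, e0]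

theorem dot3_self_nonneg (v : Fin 3 → ℝ) : 0 ≤ dot3 v v := by
  simp only [dot3]; nlinarith [sq_nonneg (v 0), sq_nonneg (v 1), sq_nonneg (v 2)]

theorem norm3_nonneg (v : Fin 3 → ℝ) : 0 ≤ norm3 v := Real.sqrt_nonneg _

theorem norm3_sq (v : Fin 3 → ℝ) : norm3 v * norm3 v = dot3 v v :=
  Real.mul_self_sqrt (dot3_self_nonneg v)

theorem abs_dot3_le (u v : Fin 3 → ℝ) : |dot3 u v| ≤ norm3 u * norm3 v := by
  have lag : dot3 u v ^ 2 ≤ dot3 u u * dot3 v v := by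
    simp only [dot3]
    nlinarith [sq_nonneg (u 0 * v 1 - u 1 * v 0), sq_nonneg (u 0 * v 2 - u 2 * v 0),
      sq_nonneg (u 1 * v 2 - u 2 * v 1)]
  calc |dot3 u v| = Real.sqrt (dot3 u v ^ 2) := (Real.sqrt_sq_eq_abs _).symm
    _ ≤ Real.sqrt (dot3 u u * dot3 v v) := Real.sqrt_le_sqrt lag
    _ = norm3 u * norm3 v := by rw [Real.sqrt_mul (dot3_self_nonneg u)]; rfl

theorem hasDerivAt_gfun (k b w : ℝ) :
    HasDerivAt (gfun k b) (-(k^2*w) - b*k + 2*k^2*(1-w)) w := by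
  have h1 : HasDerivAt (fun w : ℝ => k ^ 2 / 2 * (1 - w ^ 2) + b * k * (1 - w) - k ^ 2 * (1 - w) ^ 2)
      (k^2/2 * (-(2*w)) + b*k*(-1) - k^2*(2*(1-w)*(-1))) w := by
    have hw : HasDerivAt (fun w : ℝ => w) 1 w := hasDerivAt_id w
    have h2 : HasDerivAt (fun w : ℝ => 1 - w ^ 2) (-(2*w)) w := by
      simpa using ((hw.pow 2).const_sub 1)
    have h3 : HasDerivAt (fun w : ℝ => 1 - w) (-1) w := by simpa using hw.const_sub 1
    have h4 : HasDerivAt (fun w : ℝ => (1 - w) ^ 2) (2*(1-w)*(-1)) w := by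
      simpa using (h3.fun_pow 2)
    exact ((h2.const_mul (k^2/2)).add (h3.const_mul (b*k))).sub (h4.const_mul (k^2))
  exact myCongrDeriv h1 (by ring)

theorem gfun_one (k b : ℝ) : gfun k b 1 = 0 := by simp [gfun]

noncomputable def Efun (k b c μ : ℝ) (W : ℝ → Fin 3 → ℝ) : ℝ → ℝ := fun t =>
  t^2 * dot3 (deriv W t) (deriv W t) - 4*μ*t*dot3 (deriv W t) (cross3 e0 (W t))
    + 2*gfun k b (dot3 (W t) e0) - 4*μ*c*(1 - dot3 (W t) e0)

noncomputable def Mc (k b c μ : ℝ) : ℝ := 4*k^2 + 2*|b*k| + 4*|μ*c|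
noncomputable def Kc (k b c μ : ℝ) : ℝ :=
  2*Real.sqrt 2*|μ| + Real.sqrt (8*μ^2 + Mc k b c μ)

section
variable {k b c μ : ℝ} {W : ℝ → Fin 3 → ℝ}

theorem hW_comp (hprof : IsSimProfile k b c μ (Ioi 0) W) {r : ℝ} (hr : 0 < r) (i : Fin 3) :
    HasDerivAt (fun t => W t i) (deriv W r i) r :=
  hasDerivAt_pi.1 (hprof.2.1 r hr).1.hasDerivAt i

theorem hV_comp (hprof : IsSimProfile k b c μ (Ioi 0) W) {r : ℝ} (hr : 0 < r) (i : Fin 3) :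
    HasDerivAt (fun t => deriv W t i) (deriv (deriv W) r i) r :=
  hasDerivAt_pi.1 (hprof.2.1 r hr).2.hasDerivAt i

theorem hWW' (hprof : IsSimProfile k b c μ (Ioi 0) W) {r : ℝ} (hr : 0 < r) :
    W r 0 * W r 0 + W r 1 * W r 1 + W r 2 * W r 2 = 1 := by
  have := hprof.2.2.1 r hr; simpa [dot3] using this

theorem horth (hprof : IsSimProfile k b c μ (Ioi 0) W) {r : ℝ} (hr : 0 < r) :
    W r 0 * deriv W r 0 + W r 1 * deriv W r 1 + W r 2 * deriv W r 2 = 0 := by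
  have hc : HasDerivAt (fun t => W t 0 * W t 0 + W t 1 * W t 1 + W t 2 * W t 2)
      ((deriv W r 0 * W r 0 + W r 0 * deriv W r 0)
        + (deriv W r 1 * W r 1 + W r 1 * deriv W r 1)
        + (deriv W r 2 * W r 2 + W r 2 * deriv W r 2)) r :=
    (((hW_comp hprof hr 0).mul (hW_comp hprof hr 0)).add
      ((hW_comp hprof hr 1).mul (hW_comp hprof hr 1))).add
      ((hW_comp hprof hr 2).mul (hW_comp hprof hr 2))
  have hev : (fun t => W t 0 * W t 0 + W t 1 * W t 1 + W t 2 * W t 2) =ᶠ[nhds r]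
      (fun _ => (1:ℝ)) := by
    filter_upwards [isOpen_Ioi.mem_nhds hr] with t ht
    have := hprof.2.2.1 t ht; simpa [dot3] using this
  have hc0 : HasDerivAt (fun t => W t 0 * W t 0 + W t 1 * W t 1 + W t 2 * W t 2) 0 r :=
    (hasDerivAt_const r (1:ℝ)).congr_of_eventuallyEq hev
  have := hc.unique hc0
  linarith

theorem acc_eq (hprof : IsSimProfile k b c μ (Ioi 0) W) {r : ℝ} (hr : 0 < r) (i : Fin 3) :
    r^2 * deriv (deriv W) r i =
      -(r^2 * (deriv W r 0 * deriv W r 0 + deriv W r 1 * deriv W r 1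
          + deriv W r 2 * deriv W r 2) * W r i)
        - r * deriv W r i
        - ((-(k^2 * W r 0) - b*k + 2*k^2*(1 - W r 0)) + μ * r^2) * (e0 i - W r 0 * W r i)
        - (c*r - r^3/2) * cross3 (W r) (deriv W r) i := by
  have heq := hprof.2.2.2 r hr
  have hgd : deriv (gfun k b) (W r 0) = -(k^2 * W r 0) - b*k + 2*k^2*(1 - W r 0) :=
    (hasDerivAt_gfun k b (W r 0)).deriv
  have hi := congrFun heq i
  simp only [Pi.add_apply, Pi.smul_apply, Pi.sub_apply, smul_eq_mul, Pi.zero_apply,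
    dot3_e0, hgd] at hi
  have hr0 : r ≠ 0 := ne_of_gt hr
  have hD : dot3 (deriv W r) (deriv W r) = deriv W r 0 * deriv W r 0 + deriv W r 1 * deriv W r 1
      + deriv W r 2 * deriv W r 2 := by simp [dot3]
  rw [hD] at hi
  field_simp at hi
  refine mul_left_cancel₀ (a := 2*r^2) (by positivity) ?_
  linear_combination r^2 * hi

theorem s3 (hprof : IsSimProfile k b c μ (Ioi 0) W) {r : ℝ} (hr : 0 < r) :
    r^2 * (deriv (deriv W) r 0 * deriv W r 0 + deriv (deriv W) r 1 * deriv W r 1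
        + deriv (deriv W) r 2 * deriv W r 2) =
      -(r * (deriv W r 0 * deriv W r 0 + deriv W r 1 * deriv W r 1 + deriv W r 2 * deriv W r 2))
        - ((-(k^2 * W r 0) - b*k + 2*k^2*(1 - W r 0)) + μ * r^2) * deriv W r 0 := by
  have h0 := acc_eq hprof hr 0
  have h1 := acc_eq hprof hr 1
  have h2 := acc_eq hprof hr 2
  simp only [cross3, e0, Matrix.cons_val_zero, Matrix.cons_val_one, Matrix.head_cons,
    Matrix.cons_val_two, Matrix.tail_cons] at h0 h1 h2
  linear_combination deriv W r 0 * h0 + deriv W r 1 * h1 + deriv W r 2 * h2 +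
    (-(r^2 * (deriv W r 0 * deriv W r 0 + deriv W r 1 * deriv W r 1 + deriv W r 2 * deriv W r 2))
      + ((-(k^2 * W r 0) - b*k + 2*k^2*(1 - W r 0)) + μ * r^2) * W r 0) * horth hprof hr

theorem s4 (hprof : IsSimProfile k b c μ (Ioi 0) W) {r : ℝ} (hr : 0 < r) :
    r^2 * ((deriv (deriv W) r 2 * W r 1 + deriv W r 2 * deriv W r 1)
        - (deriv (deriv W) r 1 * W r 2 + deriv W r 1 * deriv W r 2)) =
      -(r * (deriv W r 2 * W r 1 - deriv W r 1 * W r 2)) + (c*r - r^3/2) * deriv W r 0 := by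
  have h1 := acc_eq hprof hr 1
  have h2 := acc_eq hprof hr 2
  simp only [cross3, e0, Matrix.cons_val_zero, Matrix.cons_val_one, Matrix.head_cons,
    Matrix.cons_val_two, Matrix.tail_cons] at h1 h2
  linear_combination W r 1 * h2 - W r 2 * h1 + (-(c*r - r^3/2) * W r 0) * horth hprof hr
    + ((c*r - r^3/2) * deriv W r 0) * hWW' hprof hr

theorem E_hasDerivAt (hprof : IsSimProfile k b c μ (Ioi 0) W) {r : ℝ} (hr : 0 < r) :
    HasDerivAt (Efun k b c μ W) 0 r := by
  have hW := hW_comp hprof hr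
  have hV := hV_comp hprof hr
  have hDf : HasDerivAt
      (fun t => deriv W t 0 * deriv W t 0 + deriv W t 1 * deriv W t 1 + deriv W t 2 * deriv W t 2)
      ((deriv (deriv W) r 0 * deriv W r 0 + deriv W r 0 * deriv (deriv W) r 0)
        + (deriv (deriv W) r 1 * deriv W r 1 + deriv W r 1 * deriv (deriv W) r 1)
        + (deriv (deriv W) r 2 * deriv W r 2 + deriv W r 2 * deriv (deriv W) r 2)) r :=
    (((hV 0).mul (hV 0)).add ((hV 1).mul (hV 1))).add ((hV 2).mul (hV 2))
  have hAf : HasDerivAt (fun t => deriv W t 2 * W t 1 - deriv W t 1 * W t 2)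
      ((deriv (deriv W) r 2 * W r 1 + deriv W r 2 * deriv W r 1)
        - (deriv (deriv W) r 1 * W r 2 + deriv W r 1 * deriv W r 2)) r :=
    ((hV 2).mul (hW 1)).sub ((hV 1).mul (hW 2))
  have h1 := (hasDerivAt_pow 2 r).mul hDf
  have h2 := ((hasDerivAt_id r).const_mul (4*μ)).mul hAf
  have hG := ((hasDerivAt_gfun k b (W r 0)).comp r (hW 0)).const_mul 2
  have h4 := ((hW 0).const_sub 1).const_mul (4*μ*c)
  have hcomb := ((h1.sub h2).add hG).sub h4
  refine myCongrDeriv (hcomb.congr_of_eventuallyEq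
    (Filter.Eventually.of_forall fun t => ?_)) ?_
  · simp only [Efun, dot3, cross3, e0, Matrix.cons_val_zero, Matrix.cons_val_one,
      Matrix.head_cons, Matrix.cons_val_two, Matrix.tail_cons, Function.comp, id,
      Pi.add_apply, Pi.sub_apply, Pi.mul_apply]
    ring
  have hs3 := s3 hprof hr
  have hs4 := s4 hprof hr
  simp only [id_eq]
  refine mul_left_cancel₀ (a := r^2) (by positivity) ?_
  linear_combination (2*r^2) * hs3 - (4*μ*r) * hs4

theorem E_zero (hprof : IsSimProfile k b c μ (Ioi 0) W)
    (hlim0 : Tendsto W (nhdsWithin 0 (Ioi 0)) (nhds e0))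
    (hlim1 : Tendsto (fun r => r * norm3 (deriv W r)) (nhdsWithin 0 (Ioi 0)) (nhds 0)) :
    ∀ r > (0:ℝ), Efun k b c μ W r = 0 := by
  have hconst : ∀ a₁ b₁ : ℝ, 0 < a₁ → a₁ ≤ b₁ → Efun k b c μ W b₁ = Efun k b c μ W a₁ := by
    intro a₁ b₁ ha hab
    refine constant_of_has_deriv_right_zero (f := Efun k b c μ W) ?_ ?_ b₁ (right_mem_Icc.2 hab)
    · intro t ht
      exact (E_hasDerivAt hprof (lt_of_lt_of_le ha ht.1)).differentiableAt.continuousAt.continuousWithinAt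
    · intro t ht
      exact (E_hasDerivAt hprof (lt_of_lt_of_le ha ht.1)).hasDerivWithinAt
  intro r hr
  have hEc : ∀ s ∈ Ioi (0:ℝ), Efun k b c μ W s = Efun k b c μ W r := by
    intro s hs
    rcases le_total s r with h | h
    · exact (hconst s r hs h).symm
    · exact hconst r s hr h
  have h1 : Tendsto (Efun k b c μ W) (nhdsWithin 0 (Ioi 0)) (nhds (Efun k b c μ W r)) := by
    refine Tendsto.congr' ?_ (tendsto_const_nhds (α := ℝ))
    exact eventuallyEq_of_mem self_mem_nhdsWithin fun s hs => (hEc s hs).symm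
  have hw : Tendsto (fun t => W t 0) (nhdsWithin 0 (Ioi 0)) (nhds 1) := by
    have h := ((continuous_apply (0 : Fin 3)).tendsto e0).comp hlim0
    simpa [e0, Function.comp_def] using h
  have hT1 : Tendsto (fun t => t^2 * dot3 (deriv W t) (deriv W t)) (nhdsWithin 0 (Ioi 0))
      (nhds 0) := by
    have heq : (fun t => t^2 * dot3 (deriv W t) (deriv W t))
        = fun t => (t * norm3 (deriv W t)) * (t * norm3 (deriv W t)) := by
      funext t; rw [← norm3_sq]; ring
    rw [heq]
    simpa using hlim1.mul hlim1
  have hT2 : Tendsto (fun t => 4*μ*t*dot3 (deriv W t) (cross3 e0 (W t))) (nhdsWithin 0 (Ioi 0))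
      (nhds 0) := by
    have hb : Tendsto (fun t => 4*|μ| * (t * norm3 (deriv W t))) (nhdsWithin 0 (Ioi 0))
        (nhds 0) := by simpa using hlim1.const_mul (4*|μ|)
    refine squeeze_zero_norm' ?_ hb
    filter_upwards [self_mem_nhdsWithin] with t ht
    have ht0 : (0:ℝ) < t := ht
    have hWWt := hWW' hprof ht0
    have hcd : dot3 (cross3 e0 (W t)) (cross3 e0 (W t)) ≤ 1 := by
      simp only [dot3, cross3, e0, Matrix.cons_val_zero, Matrix.cons_val_one, Matrix.head_cons,
        Matrix.cons_val_two, Matrix.tail_cons]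
      nlinarith [sq_nonneg (W t 0)]
    have hcn : norm3 (cross3 e0 (W t)) ≤ 1 := by
      rw [norm3]; exact Real.sqrt_le_one.mpr hcd
    have hA : |dot3 (deriv W t) (cross3 e0 (W t))| ≤ norm3 (deriv W t) := by
      refine le_trans (abs_dot3_le _ _) ?_
      nlinarith [norm3_nonneg (deriv W t)]
    have habs : ‖4*μ*t*dot3 (deriv W t) (cross3 e0 (W t))‖
        ≤ 4*|μ| * (t * norm3 (deriv W t)) := by
      rw [Real.norm_eq_abs, abs_mul, abs_mul, abs_mul]
      have h4 : |(4:ℝ)| = 4 := by norm_num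
      rw [h4, abs_of_pos ht0]
      have hnn : (0:ℝ) ≤ (4*|μ|)*t := by positivity
      have h5 := mul_le_mul_of_nonneg_left hA hnn
      have h6 := mul_assoc (4*|μ|) t (norm3 (deriv W t))
      linarith [h5, h6]
    exact habs
  have hgc : Continuous (gfun k b) := by unfold gfun; continuity
  have hT3 : Tendsto (fun t => 2 * gfun k b (dot3 (W t) e0)) (nhdsWithin 0 (Ioi 0)) (nhds 0) := by
    have h := ((hgc.tendsto 1).comp hw).const_mul 2
    have hg1 : gfun k b 1 = 0 := gfun_one k b
    simp only [dot3_e0]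
    simpa [hg1] using h
  have hT4 : Tendsto (fun t => 4*μ*c*(1 - dot3 (W t) e0)) (nhdsWithin 0 (Ioi 0)) (nhds 0) := by
    have h := (hw.const_sub 1).const_mul (4*μ*c)
    simp only [dot3_e0]
    simpa using h
  have h2 : Tendsto (Efun k b c μ W) (nhdsWithin 0 (Ioi 0)) (nhds 0) := by
    have h := ((hT1.sub hT2).add hT3).sub hT4
    simpa using (show Tendsto (Efun k b c μ W) (nhdsWithin 0 (Ioi 0)) (nhds (0 - 0 + 0 - 0))
      from h)
  exact tendsto_nhds_unique h1 h2

theorem w_abs_le (hprof : IsSimProfile k b c μ (Ioi 0) W) {r : ℝ} (hr : 0 < r) :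
    |W r 0| ≤ 1 := by
  have h := hWW' hprof hr
  refine abs_le.mpr ⟨?_, ?_⟩
  · nlinarith [mul_self_nonneg (W r 1), mul_self_nonneg (W r 2), mul_self_nonneg (W r 0 + 1)]
  · nlinarith [mul_self_nonneg (W r 1), mul_self_nonneg (W r 2), mul_self_nonneg (W r 0 - 1)]

theorem Mc_nonneg (k b c μ : ℝ) : 0 ≤ Mc k b c μ := by
  unfold Mc; positivity

theorem Kc_nonneg (k b c μ : ℝ) : 0 ≤ Kc k b c μ := by
  unfold Kc; positivity

set_option maxHeartbeats 1000000 in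
theorem bound_y (hprof : IsSimProfile k b c μ (Ioi 0) W) {r : ℝ} (hr : 0 < r)
    (hE : Efun k b c μ W r = 0) :
    r * norm3 (deriv W r) ≤ Kc k b c μ * Real.sqrt (1 - W r 0) := by
  have hWWr := hWW' hprof hr
  have hw1 := w_abs_le hprof hr
  obtain ⟨hwl, hwu⟩ := abs_le.mp hw1
  have hf0 : 0 ≤ 1 - W r 0 := by linarith
  set s := Real.sqrt (1 - W r 0) with hs_def
  have hs0 : 0 ≤ s := Real.sqrt_nonneg _
  have hss : s * s = 1 - W r 0 := Real.mul_self_sqrt hf0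
  set n := norm3 (deriv W r) with hn_def
  have hn0 : 0 ≤ n := norm3_nonneg _
  have hnn : n * n = dot3 (deriv W r) (deriv W r) := norm3_sq _
  -- cross product norm bound
  have hcd : dot3 (cross3 e0 (W r)) (cross3 e0 (W r)) = W r 1 * W r 1 + W r 2 * W r 2 := by
    simp only [dot3, cross3, e0, Matrix.cons_val_zero, Matrix.cons_val_one, Matrix.head_cons,
      Matrix.cons_val_two, Matrix.tail_cons]
    ring
  have hc2f : dot3 (cross3 e0 (W r)) (cross3 e0 (W r)) ≤ 2 * (1 - W r 0) := by
    rw [hcd]; nlinarith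
  have hcn : norm3 (cross3 e0 (W r)) ≤ Real.sqrt 2 * s := by
    have h2 : Real.sqrt (2 * (1 - W r 0)) = Real.sqrt 2 * s := Real.sqrt_mul (by norm_num) _
    calc norm3 (cross3 e0 (W r)) ≤ Real.sqrt (2 * (1 - W r 0)) := Real.sqrt_le_sqrt hc2f
      _ = Real.sqrt 2 * s := h2
  have hA : |dot3 (deriv W r) (cross3 e0 (W r))| ≤ n * (Real.sqrt 2 * s) :=
    le_trans (abs_dot3_le _ _) (mul_le_mul_of_nonneg_left hcn hn0)
  -- the identity
  unfold Efun at hE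
  rw [dot3_e0] at hE
  have hgf : -2*gfun k b (W r 0) + 4*μ*c*(1 - W r 0)
      = (1 - W r 0) * (k^2*(1-3*W r 0) - 2*b*k + 4*μ*c) := by
    simp only [gfun]; ring
  have hid : r^2 * dot3 (deriv W r) (deriv W r)
        - 4*μ*r*dot3 (deriv W r) (cross3 e0 (W r))
      = (1 - W r 0) * (k^2*(1-3*W r 0) - 2*b*k + 4*μ*c) := by
    linear_combination hE + hgf
  have hQle : k^2*(1-3*W r 0) - 2*b*k + 4*μ*c ≤ Mc k b c μ := by
    unfold Mc
    have hk : k^2*(1-3*W r 0) ≤ 4*k^2 := by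
      nlinarith [mul_nonneg (sq_nonneg k) (show (0:ℝ) ≤ 1 + W r 0 by linarith)]
    have hb1 : -(b*k) ≤ |b*k| := neg_le_abs _
    have hb2 : μ*c ≤ |μ*c| := le_abs_self _
    linarith
  have h1 : μ * dot3 (deriv W r) (cross3 e0 (W r)) ≤ |μ| * (n * (Real.sqrt 2 * s)) := by
    calc μ * dot3 (deriv W r) (cross3 e0 (W r))
        ≤ |μ * dot3 (deriv W r) (cross3 e0 (W r))| := le_abs_self _
      _ = |μ| * |dot3 (deriv W r) (cross3 e0 (W r))| := abs_mul _ _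
      _ ≤ |μ| * (n * (Real.sqrt 2 * s)) := mul_le_mul_of_nonneg_left hA (abs_nonneg μ)
  have h1' := mul_le_mul_of_nonneg_left h1 (show (0:ℝ) ≤ 4*r by positivity)
  have h2 : (1 - W r 0) * (k^2*(1-3*W r 0) - 2*b*k + 4*μ*c)
      ≤ (1 - W r 0) * Mc k b c μ := mul_le_mul_of_nonneg_left hQle hf0
  have hyy : (r*n)*(r*n) ≤ (4*|μ|)*((r*n)*(Real.sqrt 2 * s)) + Mc k b c μ * (s*s) := by
    have e1 : (r*n)*(r*n) = r^2*(n*n) := by ring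
    have e2 : (4*r) * (|μ| * (n * (Real.sqrt 2 * s))) = (4*|μ|) * ((r*n) * (Real.sqrt 2 * s)) := by ring
    have e3 : r^2*(n*n) = r^2 * dot3 (deriv W r) (deriv W r) := by rw [hnn]
    have e4 : (4*r)*(μ*dot3 (deriv W r) (cross3 e0 (W r)))
        = 4*μ*r*dot3 (deriv W r) (cross3 e0 (W r)) := by ring
    have e5 : Mc k b c μ * (s*s) = (1 - W r 0) * Mc k b c μ := by rw [hss]; ring
    linarith [h1', h2, hid]
  -- quadratic inequality ⇒ linear bound
  have hT0 : 0 ≤ Real.sqrt (8*μ^2 + Mc k b c μ) := Real.sqrt_nonneg _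
  have hT2 : Real.sqrt (8*μ^2 + Mc k b c μ) * Real.sqrt (8*μ^2 + Mc k b c μ)
      = 8*μ^2 + Mc k b c μ := Real.mul_self_sqrt (by nlinarith [Mc_nonneg k b c μ, sq_nonneg μ])
  have h22 : Real.sqrt 2 * Real.sqrt 2 = 2 := Real.mul_self_sqrt (by norm_num)
  have hy0 : 0 ≤ r*n := by positivity
  have habs2 : |μ| * |μ| = μ^2 := by rw [abs_mul_abs_self]; ring
  have ha0 : (0:ℝ) ≤ 2*Real.sqrt 2*|μ| := by positivity
  have ha2 : (2*Real.sqrt 2*|μ|) * (2*Real.sqrt 2*|μ|) = 8*μ^2 := by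
    linear_combination (4*(|μ| * |μ|)) * h22 + 8 * habs2
  have hsq : (r*n - 2*Real.sqrt 2*|μ| * s) * (r*n - 2*Real.sqrt 2*|μ| * s)
      ≤ (Real.sqrt (8*μ^2 + Mc k b c μ) * s) * (Real.sqrt (8*μ^2 + Mc k b c μ) * s) := by
    nlinarith [hyy, ha2, hT2]
  have hstep : r*n ≤ 2*Real.sqrt 2*|μ| * s + Real.sqrt (8*μ^2 + Mc k b c μ) * s := by
    nlinarith [hsq, mul_nonneg hT0 hs0, hy0, mul_nonneg ha0 hs0]
  have : Kc k b c μ * s = 2*Real.sqrt 2*|μ| * s + Real.sqrt (8*μ^2 + Mc k b c μ) * s := by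
    unfold Kc; ring
  linarith

theorem bound_V0 (hprof : IsSimProfile k b c μ (Ioi 0) W) {r : ℝ} (hr : 0 < r)
    (hE : Efun k b c μ W r = 0) :
    r * |deriv W r 0| ≤ (Real.sqrt 2 * Kc k b c μ) * (1 - W r 0) := by
  have hWWr := hWW' hprof hr
  obtain ⟨hwl, hwu⟩ := abs_le.mp (w_abs_le hprof hr)
  have hf0 : 0 ≤ 1 - W r 0 := by linarith
  set s := Real.sqrt (1 - W r 0) with hs_def
  have hs0 : 0 ≤ s := Real.sqrt_nonneg _
  have hss : s * s = 1 - W r 0 := Real.mul_self_sqrt hf0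
  set n := norm3 (deriv W r) with hn_def
  have hn0 : 0 ≤ n := norm3_nonneg _
  have h1 : dot3 (deriv W r) (fun i => e0 i - W r 0 * W r i) = deriv W r 0 := by
    simp only [dot3, e0, Matrix.cons_val_zero, Matrix.cons_val_one, Matrix.head_cons,
      Matrix.cons_val_two, Matrix.tail_cons]
    linear_combination (-(W r 0)) * horth hprof hr
  have h2 : dot3 (fun i => e0 i - W r 0 * W r i) (fun i => e0 i - W r 0 * W r i)
      = 1 - W r 0 * W r 0 := by
    simp only [dot3, e0, Matrix.cons_val_zero, Matrix.cons_val_one, Matrix.head_cons,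
      Matrix.cons_val_two, Matrix.tail_cons]
    linear_combination (W r 0 * W r 0) * hWW' hprof hr
  have hp2f : dot3 (fun i => e0 i - W r 0 * W r i) (fun i => e0 i - W r 0 * W r i)
      ≤ 2 * (1 - W r 0) := by rw [h2]; nlinarith
  have hpn : norm3 (fun i => e0 i - W r 0 * W r i) ≤ Real.sqrt 2 * s := by
    have h3 : Real.sqrt (2 * (1 - W r 0)) = Real.sqrt 2 * s := Real.sqrt_mul (by norm_num) _
    calc norm3 (fun i => e0 i - W r 0 * W r i) ≤ Real.sqrt (2 * (1 - W r 0)) :=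
          Real.sqrt_le_sqrt hp2f
      _ = Real.sqrt 2 * s := h3
  have hV0 : |deriv W r 0| ≤ n * (Real.sqrt 2 * s) := by
    rw [← h1]
    exact le_trans (abs_dot3_le _ _) (mul_le_mul_of_nonneg_left hpn hn0)
  have hby := bound_y hprof hr hE
  have m1 : r * |deriv W r 0| ≤ r * (n * (Real.sqrt 2 * s)) :=
    mul_le_mul_of_nonneg_left hV0 hr.le
  have m2 : r * (n * (Real.sqrt 2 * s)) = (r*n) * (Real.sqrt 2 * s) := by ring
  have m3 : (r*n) * (Real.sqrt 2 * s) ≤ (Kc k b c μ * s) * (Real.sqrt 2 * s) :=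
    mul_le_mul_of_nonneg_right hby (by positivity)
  have m4 : (Kc k b c μ * s) * (Real.sqrt 2 * s) = (Real.sqrt 2 * Kc k b c μ) * (s*s) := by ring
  rw [hss] at m4
  linarith

theorem north_pole_propagates (hprof : IsSimProfile k b c μ (Ioi 0) W)
    (hE0 : ∀ r > (0:ℝ), Efun k b c μ W r = 0) {r₀ : ℝ} (hr₀ : 0 < r₀) (h0 : W r₀ 0 = 1) :
    ∀ t > (0:ℝ), W t 0 = 1 := by
  set C := Real.sqrt 2 * Kc k b c μ with hC
  have hC0 : 0 ≤ C := mul_nonneg (Real.sqrt_nonneg 2) (Kc_nonneg k b c μ)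
  have hfnn : ∀ u, 0 < u → 0 ≤ 1 - W u 0 := fun u hu => by
    have := (abs_le.mp (w_abs_le hprof hu)).2; linarith
  have hfd : ∀ u, 0 < u → HasDerivAt (fun t => 1 - W t 0) (-(deriv W u 0)) u := fun u hu => by
    simpa using ((hW_comp hprof hu 0).const_sub 1)
  have hbd : ∀ u, 0 < u → u * |deriv W u 0| ≤ C * (1 - W u 0) := fun u hu =>
    bound_V0 hprof hu (hE0 u hu)
  intro t ht
  rcases lt_trichotomy t r₀ with hlt | heq | hgt
  · -- backward in time
    have key : ∀ x ∈ Icc t r₀, ‖(fun s => 1 - W (t + r₀ - s) 0) x‖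
        ≤ gronwallBound 0 (C/t) 0 (x - t) := by
      refine norm_le_gronwallBound_of_norm_deriv_right_le (f' := fun s => deriv W (t + r₀ - s) 0)
        ?_ ?_ ?_ ?_
      · intro s hs
        have hu : 0 < t + r₀ - s := by linarith [hs.2]
        have hinner : HasDerivAt (fun s : ℝ => t + r₀ - s) (-1) s := by
          simpa using (hasDerivAt_id s).const_sub (t + r₀)
        have := (hfd _ hu).comp s hinner
        exact (myCongrDeriv this (by ring)).differentiableAt.continuousAt.continuousWithinAt
      · intro s hs
        have hu : 0 < t + r₀ - s := by linarith [hs.2]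
        have hinner : HasDerivAt (fun s : ℝ => t + r₀ - s) (-1) s := by
          simpa using (hasDerivAt_id s).const_sub (t + r₀)
        exact (myCongrDeriv ((hfd _ hu).comp s hinner) (by ring)).hasDerivWithinAt
      · have : t + r₀ - t = r₀ := by ring
        simp [this, h0]
      · intro s hs
        have hu : 0 < t + r₀ - s := by linarith [hs.2]
        have hut : t ≤ t + r₀ - s := by linarith [hs.2]
        have hb := hbd _ hu
        have hf := hfnn _ hu
        rw [Real.norm_eq_abs, Real.norm_eq_abs, abs_of_nonneg hf]
        have h5 : t * |deriv W (t + r₀ - s) 0| ≤ (t + r₀ - s) * |deriv W (t + r₀ - s) 0| :=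
          mul_le_mul_of_nonneg_right hut (abs_nonneg _)
        rw [div_mul_eq_mul_div, add_zero, le_div_iff₀ ht]
        nlinarith [h5, hb]
    have hend := key r₀ (right_mem_Icc.2 hlt.le)
    rw [gronwallBound_ε0_δ0] at hend
    have he : t + r₀ - r₀ = t := by ring
    have habs : |1 - W t 0| ≤ 0 := by simpa [he] using hend
    have : 1 - W t 0 = 0 := abs_eq_zero.mp (le_antisymm habs (abs_nonneg _))
    linarith
  · rw [← heq] at h0; exact h0
  · -- forward in time
    have key : ∀ x ∈ Icc r₀ t, ‖(fun u => 1 - W u 0) x‖ ≤ gronwallBound 0 (C/r₀) 0 (x - r₀) := by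
      refine norm_le_gronwallBound_of_norm_deriv_right_le (f' := fun u => -(deriv W u 0))
        ?_ ?_ ?_ ?_
      · intro s hs
        have hu : 0 < s := lt_of_lt_of_le hr₀ hs.1
        exact (hfd _ hu).differentiableAt.continuousAt.continuousWithinAt
      · intro s hs
        have hu : 0 < s := lt_of_lt_of_le hr₀ hs.1
        exact (hfd _ hu).hasDerivWithinAt
      · simp [h0]
      · intro s hs
        have hu : 0 < s := lt_of_lt_of_le hr₀ hs.1
        have hb := hbd _ hu
        have hf := hfnn _ hu
        rw [Real.norm_eq_abs, Real.norm_eq_abs, abs_neg, abs_of_nonneg hf]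
        have h5 : r₀ * |deriv W s 0| ≤ s * |deriv W s 0| :=
          mul_le_mul_of_nonneg_right hs.1 (abs_nonneg _)
        rw [div_mul_eq_mul_div, add_zero, le_div_iff₀ hr₀]
        nlinarith [h5, hb]
    have hend := key t (right_mem_Icc.2 hgt.le)
    rw [gronwallBound_ε0_δ0] at hend
    have := hfnn t ht
    have habs : |1 - W t 0| ≤ 0 := by simpa using hend
    have : 1 - W t 0 = 0 := abs_eq_zero.mp (le_antisymm habs (abs_nonneg _))
    linarith

theorem eq_e0_of_w1 (hprof : IsSimProfile k b c μ (Ioi 0) W) {t : ℝ} (ht : 0 < t)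
    (h0 : W t 0 = 1) : W t = e0 := by
  have hWWt := hWW' hprof ht
  have h1 : W t 1 = 0 := by
    have : W t 1 * W t 1 = 0 := by nlinarith [mul_self_nonneg (W t 2)]
    exact mul_self_eq_zero.mp this
  have h2 : W t 2 = 0 := by
    have : W t 2 * W t 2 = 0 := by nlinarith [mul_self_nonneg (W t 1)]
    exact mul_self_eq_zero.mp this
  funext i
  fin_cases i
  · simpa [e0] using h0
  · simpa [e0] using h1
  · simpa [e0] using h2

theorem absA_le (hprof : IsSimProfile k b c μ (Ioi 0) W) {r : ℝ} (hr : 0 < r) :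
    |deriv W r 2 * W r 1 - deriv W r 1 * W r 2| ≤ norm3 (deriv W r) := by
  have hWWr := hWW' hprof hr
  have hAd : deriv W r 2 * W r 1 - deriv W r 1 * W r 2
      = dot3 (deriv W r) (cross3 e0 (W r)) := by
    simp only [dot3, cross3, e0, Matrix.cons_val_zero, Matrix.cons_val_one, Matrix.head_cons,
      Matrix.cons_val_two, Matrix.tail_cons]
    ring
  have hcd : dot3 (cross3 e0 (W r)) (cross3 e0 (W r)) ≤ 1 := by
    simp only [dot3, cross3, e0, Matrix.cons_val_zero, Matrix.cons_val_one, Matrix.head_cons,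
      Matrix.cons_val_two, Matrix.tail_cons]
    nlinarith [sq_nonneg (W r 0)]
  have hcn : norm3 (cross3 e0 (W r)) ≤ 1 := by
    rw [norm3]; exact Real.sqrt_le_one.mpr hcd
  rw [hAd]
  refine le_trans (abs_dot3_le _ _) ?_
  nlinarith [norm3_nonneg (deriv W r)]

theorem bound_n2 (hprof : IsSimProfile k b c μ (Ioi 0) W) {r : ℝ} (hr : 0 < r)
    (hE : Efun k b c μ W r = 0) :
    r * norm3 (deriv W r) ≤ Kc k b c μ * Real.sqrt 2 := by
  have h := bound_y hprof hr hE
  have h2 : Real.sqrt (1 - W r 0) ≤ Real.sqrt 2 := by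
    refine Real.sqrt_le_sqrt ?_
    have := (abs_le.mp (w_abs_le hprof hr)).1
    linarith
  calc r * norm3 (deriv W r) ≤ Kc k b c μ * Real.sqrt (1 - W r 0) := h
    _ ≤ Kc k b c μ * Real.sqrt 2 := mul_le_mul_of_nonneg_left h2 (Kc_nonneg k b c μ)

theorem phi_deriv (hprof : IsSimProfile k b c μ (Ioi 0) W) {r : ℝ} (hr : 0 < r) :
    HasDerivAt (fun t => W t 0 + 2*(deriv W t 2 * W t 1 - deriv W t 1 * W t 2)/t
        + 2*c*(1 - W t 0)/t^2)
      (-4*(deriv W r 2 * W r 1 - deriv W r 1 * W r 2)/r^2 - 4*c*(1 - W r 0)/r^3) r := by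
  have hW := hW_comp hprof hr
  have hV := hV_comp hprof hr
  have hAf : HasDerivAt (fun t => deriv W t 2 * W t 1 - deriv W t 1 * W t 2)
      ((deriv (deriv W) r 2 * W r 1 + deriv W r 2 * deriv W r 1)
        - (deriv (deriv W) r 1 * W r 2 + deriv W r 1 * deriv W r 2)) r :=
    ((hV 2).mul (hW 1)).sub ((hV 1).mul (hW 2))
  have hid : (id r : ℝ) ≠ 0 := hr.ne'
  have hd1 := (hAf.const_mul 2).div (hasDerivAt_id r) hid
  have hd2 := (((hW 0).const_sub 1).const_mul (2*c)).div (hasDerivAt_pow 2 r)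
    (pow_ne_zero 2 hr.ne')
  have hcomb := ((hW 0).add hd1).add hd2
  refine myCongrDeriv (hcomb.congr_of_eventuallyEq
    (Filter.Eventually.of_forall fun t => ?_)) ?_
  · simp only [id_eq, Pi.add_apply, Pi.div_apply]
  · have hs4 := s4 hprof hr
    have hr0 : r ≠ 0 := hr.ne'
    simp only [id_eq]
    field_simp
    linear_combination (2*r) * hs4

theorem part3 (hprof : IsSimProfile k b c μ (Ioi 0) W)
    (hE0 : ∀ r > (0:ℝ), Efun k b c μ W r = 0) :
    ∃ L : ℝ, Tendsto (fun r => dot3 (W r) e0) atTop (nhds L) := by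
  set Cn := Kc k b c μ * Real.sqrt 2 with hCn
  have hCn0 : 0 ≤ Cn := mul_nonneg (Kc_nonneg k b c μ) (Real.sqrt_nonneg 2)
  set C3 := 4*Cn + 8*|c| with hC3
  have hC30 : 0 ≤ C3 := by positivity
  have hnA : ∀ x, 0 < x → |deriv W x 2 * W x 1 - deriv W x 1 * W x 2| * x ≤ Cn := by
    intro x hx
    have h1 := absA_le hprof hx
    have h2 := bound_n2 hprof hx (hE0 x hx)
    have h3 := mul_le_mul_of_nonneg_right h1 hx.le
    have h4 : norm3 (deriv W x) * x = x * norm3 (deriv W x) := mul_comm _ _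
    rw [hCn]; linarith
  have hfb : ∀ x, 0 < x → 0 ≤ 1 - W x 0 ∧ 1 - W x 0 ≤ 2 := by
    intro x hx
    obtain ⟨h1, h2⟩ := abs_le.mp (w_abs_le hprof hx)
    exact ⟨by linarith, by linarith⟩
  have hud : ∀ x : ℝ, 0 < x → HasDerivAt
      (fun t => W t 0 + 2*(deriv W t 2 * W t 1 - deriv W t 1 * W t 2)/t
        + 2*c*(1 - W t 0)/t^2 + C3/(2*t^2))
      ((-4*(deriv W x 2 * W x 1 - deriv W x 1 * W x 2)/x^2 - 4*c*(1 - W x 0)/x^3)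
        + -(C3/x^3)) x := by
    intro x hx
    have hne : (2*x^2 : ℝ) ≠ 0 := by positivity
    have h2t := (hasDerivAt_pow 2 x).const_mul (2:ℝ)
    have hψ : HasDerivAt (fun t : ℝ => C3/(2*t^2)) (-(C3/x^3)) x :=
      myCongrDeriv ((hasDerivAt_const x C3).div h2t hne) (by field_simp; ring)
    exact (phi_deriv hprof hx).add hψ
  -- antitone on [1, ∞)
  have hanti : AntitoneOn
      (fun t => W t 0 + 2*(deriv W t 2 * W t 1 - deriv W t 1 * W t 2)/t
        + 2*c*(1 - W t 0)/t^2 + C3/(2*t^2)) (Ici 1) := by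
    refine antitoneOn_of_deriv_nonpos (convex_Ici 1) ?_ ?_ ?_
    · intro x hx
      have hx0 : (0:ℝ) < x := lt_of_lt_of_le one_pos hx
      exact (hud x hx0).differentiableAt.continuousAt.continuousWithinAt
    · rw [interior_Ici]
      intro x hx
      have hx0 : (0:ℝ) < x := lt_trans one_pos hx
      exact (hud x hx0).differentiableAt.differentiableWithinAt
    · rw [interior_Ici]
      intro x hx
      have hx0 : (0:ℝ) < x := lt_trans one_pos hx
      rw [(hud x hx0).deriv]
      have hA := hnA x hx0
      obtain ⟨hf1, hf2⟩ := hfb x hx0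
      have hmul : x^3 * ((-4*(deriv W x 2 * W x 1 - deriv W x 1 * W x 2)/x^2
            - 4*c*(1 - W x 0)/x^3) + -(C3/x^3))
          = -4*((deriv W x 2 * W x 1 - deriv W x 1 * W x 2)*x) - 4*(c*(1 - W x 0)) - C3 := by
        field_simp; ring
      have e1 := mul_le_mul_of_nonneg_right
        (neg_abs_le (deriv W x 2 * W x 1 - deriv W x 1 * W x 2)) hx0.le
      have e2 := mul_le_mul_of_nonneg_right (neg_abs_le c) hf1
      have e3 : |c| * (1 - W x 0) ≤ |c| * 2 := mul_le_mul_of_nonneg_left hf2 (abs_nonneg c)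
      have hnum : -4*((deriv W x 2 * W x 1 - deriv W x 1 * W x 2)*x)
          - 4*(c*(1 - W x 0)) - C3 ≤ 0 := by
        rw [hC3]; linarith
      nlinarith [hmul, hnum, pow_pos hx0 3]
  -- lower bound on [1, ∞)
  have hlb : ∀ x : ℝ, 1 ≤ x → -(1 + 2*Cn + 4*|c|)
      ≤ W x 0 + 2*(deriv W x 2 * W x 1 - deriv W x 1 * W x 2)/x
        + 2*c*(1 - W x 0)/x^2 + C3/(2*x^2) := by
    intro x hx1
    have hx0 : (0:ℝ) < x := lt_of_lt_of_le one_pos hx1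
    obtain ⟨hf1, hf2⟩ := hfb x hx0
    have e1 : |deriv W x 2 * W x 1 - deriv W x 1 * W x 2| ≤ Cn :=
      le_trans (le_mul_of_one_le_right (abs_nonneg _) hx1) (hnA x hx0)
    have e2 : |2*(deriv W x 2 * W x 1 - deriv W x 1 * W x 2)/x| ≤ 2*Cn := by
      rw [abs_div, abs_of_pos hx0]
      calc |2*(deriv W x 2 * W x 1 - deriv W x 1 * W x 2)|/x
          ≤ |2*(deriv W x 2 * W x 1 - deriv W x 1 * W x 2)| := div_le_self (abs_nonneg _) hx1
        _ = 2 * |deriv W x 2 * W x 1 - deriv W x 1 * W x 2| := by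
            rw [abs_mul]; norm_num
        _ ≤ 2*Cn := by linarith
    have e3 : |2*c*(1 - W x 0)/x^2| ≤ 4*|c| := by
      have hx2 : (1:ℝ) ≤ x^2 := by nlinarith
      rw [abs_div, abs_of_pos (by positivity : (0:ℝ) < x^2)]
      have h1 : |2*c*(1 - W x 0)| = 2 * |c| * (1 - W x 0) := by
        rw [abs_mul, abs_mul, abs_of_nonneg hf1]; norm_num
      have h2 : |c| * (1 - W x 0) ≤ |c| * 2 := mul_le_mul_of_nonneg_left hf2 (abs_nonneg c)
      have h3 : |2*c*(1 - W x 0)|/x^2 ≤ |2*c*(1 - W x 0)| := div_le_self (abs_nonneg _) hx2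
      linarith
    have e4 : 0 ≤ C3/(2*x^2) := div_nonneg hC30 (by positivity)
    have e5 : -1 ≤ W x 0 := (abs_le.mp (w_abs_le hprof hx0)).1
    obtain ⟨e2l, _⟩ := abs_le.mp e2
    obtain ⟨e3l, _⟩ := abs_le.mp e3
    linarith
  -- convergence of the monotone majorant
  have hΦanti : Antitone (fun t => (fun s => W s 0
      + 2*(deriv W s 2 * W s 1 - deriv W s 1 * W s 2)/s
      + 2*c*(1 - W s 0)/s^2 + C3/(2*s^2)) (max t 1)) := by
    intro x y hxy
    exact hanti (le_max_right x 1) (le_max_right y 1) (max_le_max hxy le_rfl)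
  have hbdd : BddBelow (range (fun t => (fun s => W s 0
      + 2*(deriv W s 2 * W s 1 - deriv W s 1 * W s 2)/s
      + 2*c*(1 - W s 0)/s^2 + C3/(2*s^2)) (max t 1))) := by
    refine ⟨-(1 + 2*Cn + 4*|c|), ?_⟩
    rintro z ⟨t, rfl⟩
    exact hlb _ (le_max_right t 1)
  have htendΦ := tendsto_atTop_ciInf hΦanti hbdd
  set L0 := ⨅ t : ℝ, (fun s => W s 0
      + 2*(deriv W s 2 * W s 1 - deriv W s 1 * W s 2)/s
      + 2*c*(1 - W s 0)/s^2 + C3/(2*s^2)) (max t 1) with hL0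
  have htendu : Tendsto (fun s => W s 0
      + 2*(deriv W s 2 * W s 1 - deriv W s 1 * W s 2)/s
      + 2*c*(1 - W s 0)/s^2 + C3/(2*s^2)) atTop (nhds L0) := by
    refine htendΦ.congr' ?_
    filter_upwards [eventually_ge_atTop (1:ℝ)] with t ht
    rw [max_eq_left ht]
  -- the correction terms tend to zero
  have hsq : Tendsto (fun t : ℝ => t^2) atTop atTop := tendsto_pow_atTop (by norm_num)
  have hψ0 : Tendsto (fun t : ℝ => C3/(2*t^2)) atTop (nhds 0) :=
    Tendsto.div_atTop tendsto_const_nhds (hsq.const_mul_atTop (by norm_num))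
  have hA0 : Tendsto (fun t => 2*(deriv W t 2 * W t 1 - deriv W t 1 * W t 2)/t) atTop
      (nhds 0) := by
    have hb : Tendsto (fun t : ℝ => 2*Cn/t^2) atTop (nhds 0) :=
      Tendsto.div_atTop tendsto_const_nhds hsq
    refine squeeze_zero_norm' ?_ hb
    filter_upwards [eventually_ge_atTop (1:ℝ)] with t ht1
    have ht0 : (0:ℝ) < t := lt_of_lt_of_le one_pos ht1
    have h1 := hnA t ht0
    rw [Real.norm_eq_abs, abs_div, abs_of_pos ht0, abs_mul]
    rw [div_le_div_iff₀ ht0 (by positivity : (0:ℝ) < t^2)]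
    have h2 : |(2:ℝ)| = 2 := by norm_num
    rw [h2]
    nlinarith [abs_nonneg (deriv W t 2 * W t 1 - deriv W t 1 * W t 2), hCn0]
  have hcf0 : Tendsto (fun t => 2*c*(1 - W t 0)/t^2) atTop (nhds 0) := by
    have hb : Tendsto (fun t : ℝ => 4*|c|/t^2) atTop (nhds 0) :=
      Tendsto.div_atTop tendsto_const_nhds hsq
    refine squeeze_zero_norm' ?_ hb
    filter_upwards [eventually_ge_atTop (1:ℝ)] with t ht1
    have ht0 : (0:ℝ) < t := lt_of_lt_of_le one_pos ht1
    obtain ⟨hf1, hf2⟩ := hfb t ht0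
    rw [Real.norm_eq_abs, abs_div, abs_of_pos (by positivity : (0:ℝ) < t^2)]
    gcongr
    rw [abs_mul, abs_mul, abs_of_nonneg hf1]
    have h2 : |(2:ℝ)| = 2 := by norm_num
    rw [h2]
    nlinarith [abs_nonneg c]
  have hfinal := ((htendu.sub hψ0).sub hA0).sub hcf0
  refine ⟨L0, ?_⟩
  have hcg : ∀ x : ℝ, (W x 0
      + 2*(deriv W x 2 * W x 1 - deriv W x 1 * W x 2)/x
      + 2*c*(1 - W x 0)/x^2 + C3/(2*x^2)) - C3/(2*x^2)
      - 2*(deriv W x 2 * W x 1 - deriv W x 1 * W x 2)/x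
      - 2*c*(1 - W x 0)/x^2 = dot3 (W x) e0 := by
    intro x; rw [dot3_e0]; ring
  have := Tendsto.congr hcg hfinal
  simpa using this

end

/-- Sphere case, `c² < −4(bk + k²)`: for a nonconstant similarity spherical profile
emanating from the north pole: (0) the conserved identity (5.14) holds; (1) `W` never
returns to the north pole; (2) `|W′(r)| = O(1/r)`; (3) `W(r)·e₀` converges as `r → ∞`. -/
theorem stmt15 (k b c μ : ℝ) (hb : c ^ 2 < -4 * (b * k + k ^ 2))
    (W : ℝ → Fin 3 → ℝ)
    (hprof : IsSimProfile k b c μ (Ioi 0) W)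
    (hnonconst : ∃ r₁ > (0:ℝ), ∃ r₂ > (0:ℝ), W r₁ ≠ W r₂)
    (hlim0 : Tendsto W (nhdsWithin 0 (Ioi 0)) (nhds e0))
    (hlim1 : Tendsto (fun r => r * norm3 (deriv W r)) (nhdsWithin 0 (Ioi 0)) (nhds 0)) :
    (∀ r > (0:ℝ),
      r ^ 2 * dot3 (deriv W r) (deriv W r)
          - 4 * μ * r * dot3 (deriv W r) (cross3 e0 (W r))
        = -2 * gfun k b (dot3 (W r) e0) + 4 * μ * c * (1 - dot3 (W r) e0)) ∧
    (∀ r > (0:ℝ), W r ≠ e0) ∧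
    ((fun r => norm3 (deriv W r)) =O[atTop] (fun r : ℝ => r⁻¹)) ∧
    (∃ L : ℝ, Tendsto (fun r => dot3 (W r) e0) atTop (nhds L)) := by
  have hE0 : ∀ r > (0:ℝ), Efun k b c μ W r = 0 := E_zero hprof hlim0 hlim1
  refine ⟨?_, ?_, ?_, part3 hprof hE0⟩
  · intro r hr
    have h := hE0 r hr
    unfold Efun at h
    linarith
  · intro r hr hWe
    have h0 : W r 0 = 1 := by rw [hWe]; simp [e0]
    have hall := north_pole_propagates hprof hE0 hr h0
    obtain ⟨r₁, h₁, r₂, h₂, hne⟩ := hnonconst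
    exact hne (by rw [eq_e0_of_w1 hprof h₁ (hall r₁ h₁), eq_e0_of_w1 hprof h₂ (hall r₂ h₂)])
  · rw [isBigO_iff]
    refine ⟨Kc k b c μ * Real.sqrt 2, ?_⟩
    filter_upwards [eventually_ge_atTop (1:ℝ)] with r hr1
    have hr : (0:ℝ) < r := lt_of_lt_of_le one_pos hr1
    have hb := bound_n2 hprof hr (hE0 r hr)
    rw [Real.norm_eq_abs, Real.norm_eq_abs, abs_of_nonneg (norm3_nonneg _),
      abs_of_nonneg (inv_nonneg.mpr hr.le), ← div_eq_mul_inv, le_div_iff₀ hr]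
    linarith [hb, mul_comm (norm3 (deriv W r)) r]
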